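/- Let n ≥ 1 and r ∈ (0,1). The n×n matrix T* defined by (T*)_{ij} = 0 for i < j, (T*)_{ii} = r, and (T*)_{ij} = (1−r²)(−r)^{i−j−1} for i > j, satisfies ‖T*‖ ≤ 1 and its spectrum equals {r}; in particular ρ(T*) = r. -/

import Mathlib

/-!
With `S` the lower shift, `T* = (r + S)(1 + rS)⁻¹` is the Blaschke factor `(z + r)/(1 + rz)`
evaluated at the contraction `S`. Writing `x = (1 + rS)y`, one has
`‖x‖² - ‖T* x‖² = (1 - r²)(‖y‖² - ‖Sy‖²) ≥ 0`, so `T*` is a contraction. Being lower triangular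
with constant diagonal `r`, its spectrum is `{r}`.
-/

/-- The operator norm of a complex `n × n` matrix induced by the Euclidean norm on `ℂⁿ`. -/
noncomputable def matNorm {n : ℕ} (T : Matrix (Fin n) (Fin n) ℂ) : ℝ :=
  ‖Matrix.toEuclideanCLM (𝕜 := ℂ) T‖

/-- The `n × n` lower-triangular Toeplitz matrix `T*` with `r` on the diagonal and
`(1 - r²)(-r)^(i - j - 1)` below the diagonal. -/
noncomputable def Tstar (n : ℕ) (r : ℝ) : Matrix (Fin n) (Fin n) ℂ :=
  Matrix.of fun i j =>
    if (i : ℕ) < (j : ℕ) then 0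
    else if (i : ℕ) = (j : ℕ) then (r : ℂ)
    else ((1 : ℂ) - (r : ℂ) ^ 2) * (-(r : ℂ)) ^ ((i : ℕ) - (j : ℕ) - 1)

section

variable {𝕜 E : Type*} [RCLike 𝕜] [NormedAddCommGroup E] [InnerProductSpace 𝕜 E]

lemma norm_add_smul_sq_sub_norm_smul_add_sq (r : ℝ) (u v : E) :
    ‖u + (r : 𝕜) • v‖ ^ 2 - ‖(r : 𝕜) • u + v‖ ^ 2 = (1 - r ^ 2) * (‖u‖ ^ 2 - ‖v‖ ^ 2) := by
  simp only [@norm_add_sq 𝕜, inner_smul_left, inner_smul_right, norm_smul, RCLike.conj_ofReal,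
    RCLike.re_ofReal_mul, RCLike.norm_ofReal, mul_pow, sq_abs]
  ring

lemma norm_smul_add_le_norm_add_smul {r : ℝ} (hr : |r| ≤ 1) {u v : E} (huv : ‖v‖ ≤ ‖u‖) :
    ‖(r : 𝕜) • u + v‖ ≤ ‖u + (r : 𝕜) • v‖ := by
  have h := norm_add_smul_sq_sub_norm_smul_add_sq (𝕜 := 𝕜) r u v
  have hr2 : 0 ≤ 1 - r ^ 2 := by nlinarith [sq_abs r, abs_nonneg r]
  have huv2 : 0 ≤ ‖u‖ ^ 2 - ‖v‖ ^ 2 := by nlinarith [norm_nonneg v]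
  exact le_of_sq_le_sq (by nlinarith [mul_nonneg hr2 huv2]) (norm_nonneg _)

theorem ContinuousLinearMap.norm_le_one_of_mul_one_add_smul [CompleteSpace E]
    {S T : E →L[𝕜] E} (hS : ‖S‖ ≤ 1) {r : ℝ} (hr : |r| < 1)
    (hT : T * (1 + (r : 𝕜) • S) = (r : 𝕜) • 1 + S) : ‖T‖ ≤ 1 := by
  obtain ⟨B, hB⟩ : IsUnit (1 + (r : 𝕜) • S) := by
    rw [← sub_neg_eq_add]
    refine isUnit_one_sub_of_norm_lt_one ?_
    rw [norm_neg, norm_smul, RCLike.norm_ofReal]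
    nlinarith [abs_nonneg r, norm_nonneg S]
  refine opNorm_le_bound _ zero_le_one fun x ↦ ?_
  set y := (↑B⁻¹ : E →L[𝕜] E) x
  have hx : (1 + (r : 𝕜) • S) y = x := by
    rw [← hB, ← mul_apply_eq_comp, B.mul_inv, one_apply_eq_self]
  have hSy : ‖S y‖ ≤ ‖y‖ := by simpa using S.le_of_opNorm_le hS y
  calc ‖T x‖ = ‖(T * (1 + (r : 𝕜) • S)) y‖ := by rw [mul_apply_eq_comp, hx]
    _ = ‖(r : 𝕜) • y + S y‖ := by rw [hT]; rfl
    _ ≤ ‖y + (r : 𝕜) • S y‖ := norm_smul_add_le_norm_add_smul hr.le hSy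
    _ = 1 * ‖x‖ := by rw [← hx, one_mul]; rfl

end

open Matrix

theorem Matrix.spectrum_eq_range_diag_of_isLowerTriangular {K n : Type*} [Field K] [Fintype n]
    [LinearOrder n] [DecidableEq n] {A : Matrix n n K} (hA : A.IsLowerTriangular) :
    spectrum K A = Set.range A.diag := by
  ext μ
  have hdet : (algebraMap K (Matrix n n K) μ - A).det = ∏ i, (μ - A i i) := by
    rw [det_of_isLowerTriangular _ ?_]
    · simp [algebraMap_eq_diagonal]
    · intro i j hij
      have hij' : i < j := hij
      simp [algebraMap_eq_diagonal, hA hij, hij'.ne]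
  rw [spectrum.mem_iff, isUnit_iff_isUnit_det, hdet, isUnit_iff_ne_zero, not_not,
    Finset.prod_eq_zero_iff]
  simp [sub_eq_zero, eq_comm]

def lowerShift (R : Type*) [Zero R] [One R] (n : ℕ) : Matrix (Fin n) (Fin n) R :=
  Matrix.of fun i j ↦ if (i : ℕ) = j + 1 then 1 else 0

section
variable {R : Type*} [NonAssocSemiring R] {m : ℕ}

@[simp] lemma lowerShift_mulVec_zero (y : Fin (m + 1) → R) : (lowerShift R (m + 1) *ᵥ y) 0 = 0 := by
  simp [lowerShift, mulVec, dotProduct]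

@[simp] lemma lowerShift_mulVec_succ (y : Fin (m + 1) → R) (i : Fin m) :
    (lowerShift R (m + 1) *ᵥ y) i.succ = y i.castSucc := by
  rw [mulVec, dotProduct, Finset.sum_eq_single i.castSucc]
  · simp [lowerShift]
  · intro k _ hk
    simp [lowerShift, Fin.ext_iff] at hk ⊢
    omega
  · simp

lemma mul_lowerShift_apply {n : ℕ} (A : Matrix (Fin n) (Fin n) R) (i j : Fin n) :
    (A * lowerShift R n) i j = if h : (j : ℕ) + 1 < n then A i ⟨j + 1, h⟩ else 0 := by
  split_ifs with h
  · rw [mul_apply, Finset.sum_eq_single ⟨j + 1, h⟩]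
    · simp [lowerShift]
    · intro k _ hk
      simp [lowerShift, Fin.ext_iff] at hk ⊢
      omega
    · simp
  · refine (mul_apply ..).trans <| Finset.sum_eq_zero fun k _ ↦ ?_
    have : (k : ℕ) ≠ j + 1 := by omega
    simp [lowerShift, this]
end

lemma norm_toEuclideanCLM_lowerShift_le {𝕜 : Type*} [RCLike 𝕜] (n : ℕ) :
    ‖toEuclideanCLM (𝕜 := 𝕜) (lowerShift 𝕜 n)‖ ≤ 1 := by
  refine ContinuousLinearMap.opNorm_le_bound _ zero_le_one fun x ↦ ?_
  rw [one_mul]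
  refine le_of_sq_le_sq ?_ (norm_nonneg _)
  rw [EuclideanSpace.norm_sq_eq, EuclideanSpace.norm_sq_eq, ofLp_toEuclideanCLM]
  cases n with
  | zero => simp
  | succ m =>
    rw [Fin.sum_univ_succ, Fin.sum_univ_castSucc]
    simp

lemma Tstar_mul_one_add_smul_lowerShift (n : ℕ) (r : ℝ) :
    Tstar n r * (1 + (r : ℂ) • lowerShift ℂ n) = (r : ℂ) • 1 + lowerShift ℂ n := by
  ext i j
  rw [Matrix.mul_add, Matrix.mul_smul, mul_one, Matrix.add_apply, Matrix.smul_apply,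
    mul_lowerShift_apply, Matrix.add_apply, Matrix.smul_apply]
  simp only [Tstar, lowerShift, of_apply, one_apply, Fin.ext_iff, smul_eq_mul]
  -- below the subdiagonal `t i j = -r * t i (j + 1)`; on it `t i j + r * t i i = 1 - r ^ 2 + r ^ 2`
  split_ifs <;> first
    | omega
    | ring1
    | (rw [show (i : ℕ) - j - 1 = 0 by omega]; ring)
    | (rw [show (i : ℕ) - j - 1 = (i - (j + 1) - 1) + 1 by omega]; ring)

lemma Tstar_isLowerTriangular (n : ℕ) (r : ℝ) : (Tstar n r).IsLowerTriangular := by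
  intro i j hij
  exact if_pos hij

lemma diag_Tstar (n : ℕ) (r : ℝ) : (Tstar n r).diag = fun _ ↦ (r : ℂ) := by
  ext i
  simp [Tstar]

theorem stmt1 (n : ℕ) (hn : 1 ≤ n) (r : ℝ) (hr : r ∈ Set.Ioo (0 : ℝ) 1) :
    matNorm (Tstar n r) ≤ 1 ∧ spectrum ℂ (Tstar n r) = {(r : ℂ)} ∧
      spectralRadius ℂ (Tstar n r) = ENNReal.ofReal r := by
  have : Nonempty (Fin n) := ⟨⟨0, hn⟩⟩
  have hspec : spectrum ℂ (Tstar n r) = {(r : ℂ)} := by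
    rw [spectrum_eq_range_diag_of_isLowerTriangular (Tstar_isLowerTriangular n r), diag_Tstar,
      Set.range_const]
  refine ⟨?_, hspec, ?_⟩
  · refine ContinuousLinearMap.norm_le_one_of_mul_one_add_smul
      (norm_toEuclideanCLM_lowerShift_le n) (abs_lt.mpr ⟨by linarith [hr.1], hr.2⟩) ?_
    have h := congrArg (toEuclideanCLM (𝕜 := ℂ) (n := Fin n))
      (Tstar_mul_one_add_smul_lowerShift n r)
    rwa [map_mul, map_add, map_add, map_smul, map_smul, map_one] at h
  · rw [spectralRadius, hspec, iSup_singleton, ← Real.enorm_eq_ofReal hr.1.le]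
    simp [enorm]
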